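/- Let ‖·‖₀ and ‖·‖₁ be norms on ℂⁿ and let ‖·‖_λ be the complex interpolation norm for λ ∈ [0,1]. Then the dual norms satisfy ‖z‖_λ* ≤ (‖z‖₀*)^{1-λ} (‖z‖₁*)^λ for every z ∈ ℂⁿ. -/

import Mathlib

open MeasureTheory Set

noncomputable section

/-- A complex body in ℂⁿ ≅ ℝ^{2n}: convex, origin-symmetric, compact, nonempty
interior, and invariant under complex rotations. -/
def IsCxBody {n : ℕ} (K : Set (Fin n → ℂ)) : Prop :=
  Convex ℝ K ∧ K = -K ∧ IsCompact K ∧ (interior K).Nonempty ∧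
    ∀ φ : ℝ, (fun z : Fin n → ℂ => fun j => Complex.exp (φ * Complex.I) * z j) '' K = K

/-- The real inner product Re⟨x, θ⟩ on ℂⁿ ≅ ℝ^{2n}. -/
def crinner {n : ℕ} (x θ : Fin n → ℂ) : ℝ := (∑ j, x j * (starRingEnd ℂ) (θ j)).re

/-- Support function of a set in ℂⁿ, with respect to the real inner product. -/
def csuppFn {n : ℕ} (K : Set (Fin n → ℂ)) (θ : Fin n → ℂ) : ℝ :=
  sSup ((fun x => crinner x θ) '' K)

/-- Logarithmic mean of two bodies in ℂⁿ. -/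
def clogMean {n : ℕ} (l : ℝ) (K T : Set (Fin n → ℂ)) : Set (Fin n → ℂ) :=
  {x | ∀ θ, crinner x θ ≤ csuppFn K θ ^ (1 - l) * csuppFn T θ ^ l}
/-- `N` is a norm on ℂⁿ. -/
def IsNormC {n : ℕ} (N : (Fin n → ℂ) → ℝ) : Prop :=
  (∀ x, 0 ≤ N x) ∧ (∀ x, N x = 0 ↔ x = 0) ∧
  (∀ (a : ℂ) (x), N (a • x) = ‖a‖ * N x) ∧
  (∀ x y, N (x + y) ≤ N x + N y)

/-- Closed strip 0 ≤ Re w ≤ 1. -/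
def closedStrip : Set ℂ := {w | w.re ∈ Icc (0 : ℝ) 1}

/-- Open strip 0 < Re w < 1. -/
def openStrip : Set ℂ := {w | w.re ∈ Ioo (0 : ℝ) 1}

/-- Membership in the interpolation family 𝓕: bounded and continuous on the closed
strip, analytic on the open strip, tending to 0 at ±i∞ on both boundary lines. -/
def MemF {n : ℕ} (f : ℂ → Fin n → ℂ) : Prop :=
  ContinuousOn f closedStrip ∧ DifferentiableOn ℂ f openStrip ∧
  (∃ C, ∀ w ∈ closedStrip, ‖f w‖ ≤ C) ∧
  Filter.Tendsto (fun t : ℝ => f (t * Complex.I)) Filter.atTop (nhds 0) ∧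
  Filter.Tendsto (fun t : ℝ => f (t * Complex.I)) Filter.atBot (nhds 0) ∧
  Filter.Tendsto (fun t : ℝ => f (1 + t * Complex.I)) Filter.atTop (nhds 0) ∧
  Filter.Tendsto (fun t : ℝ => f (1 + t * Complex.I)) Filter.atBot (nhds 0)

/-- The norm on the family 𝓕. -/
def fNorm {n : ℕ} (N0 N1 : (Fin n → ℂ) → ℝ) (f : ℂ → Fin n → ℂ) : ℝ :=
  max (⨆ t : ℝ, N0 (f (t * Complex.I))) (⨆ t : ℝ, N1 (f (1 + t * Complex.I)))

/-- The complex interpolation norm. -/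
def interpNorm {n : ℕ} (N0 N1 : (Fin n → ℂ) → ℝ) (l : ℝ) (x : Fin n → ℂ) : ℝ :=
  sInf (fNorm N0 N1 '' {f | MemF f ∧ f (l : ℂ) = x})

/-- The dual norm ‖z‖* = sup_{N x ≤ 1} |⟨x, z⟩|. -/
def dualNorm {n : ℕ} (N : (Fin n → ℂ) → ℝ) (z : Fin n → ℂ) : ℝ :=
  sSup ((fun x => ‖∑ j, x j * (starRingEnd ℂ) (z j)‖) '' {x | N x ≤ 1})

/-! Take `x` with `‖x‖_λ ≤ 1` and `f ∈ 𝓕` with `f λ = x`. The scalar function `w ↦ ⟨f w, z⟩`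
is bounded and analytic on the strip, of modulus at most `‖z‖₀* ‖f‖_𝓕` on `Re w = 0` and
`‖z‖₁* ‖f‖_𝓕` on `Re w = 1`, so Hadamard's three-lines theorem gives
`|⟨x, z⟩| ≤ (‖z‖₀*)^(1-λ) (‖z‖₁*)^λ ‖f‖_𝓕`; the infimum over `f` replaces `‖f‖_𝓕` by `‖x‖_λ`.
The only finite-dimensional input is that every norm is equivalent to the sup norm, which keeps
the suprema defining `‖·‖_𝓕` and the dual norms finite. The pairing `⟨x, z⟩ = ∑ xⱼ z̄ⱼ` is
`x ⬝ᵥ star z`. -/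

open Complex Filter Matrix
open Complex.HadamardThreeLines (verticalStrip verticalClosedStrip
  norm_le_interp_of_mem_verticalClosedStrip₀₁')

namespace IsNormC

variable {n : ℕ} {N : (Fin n → ℂ) → ℝ}

lemma map_zero (hN : IsNormC N) : N 0 = 0 := (hN.2.1 0).2 rfl

lemma pos (hN : IsNormC N) {x : Fin n → ℂ} (hx : x ≠ 0) : 0 < N x :=
  (hN.1 x).lt_of_ne fun h => hx ((hN.2.1 x).1 h.symm)

lemma exists_le_mul_norm (hN : IsNormC N) : ∃ C, 0 ≤ C ∧ ∀ x, N x ≤ C * ‖x‖ := by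
  refine ⟨∑ j, N (Pi.single j 1), Finset.sum_nonneg fun j _ => hN.1 _, fun x => ?_⟩
  calc N x = N (∑ j, x j • Pi.single j 1) := by
        simp [← Pi.single_smul, Finset.univ_sum_single]
    _ ≤ ∑ j, N (x j • Pi.single j 1) :=
      Finset.le_sum_of_subadditive N hN.map_zero.le hN.2.2.2 _ _
    _ = ∑ j, ‖x j‖ * N (Pi.single j 1) := by simp only [hN.2.2.1]
    _ ≤ ∑ j, ‖x‖ * N (Pi.single j 1) := by
      gcongr with j
      · exact hN.1 _
      · exact norm_le_pi_norm x j
    _ = (∑ j, N (Pi.single j 1)) * ‖x‖ := by rw [← Finset.mul_sum, mul_comm]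

lemma continuous (hN : IsNormC N) : Continuous N := by
  obtain ⟨C, hC, hle⟩ := hN.exists_le_mul_norm
  refine (LipschitzWith.of_le_add_mul C.toNNReal fun a b => ?_).continuous
  calc N a = N (a - b + b) := by rw [sub_add_cancel]
    _ ≤ N b + C * dist a b := by
      rw [dist_eq_norm]; linarith [hN.2.2.2 (a - b) b, hle (a - b)]
    _ = N b + C.toNNReal * dist a b := by rw [Real.coe_toNNReal C hC]

/-- `N` attains a positive minimum on the unit sphere. -/
lemma exists_pos_mul_norm_le (hN : IsNormC N) : ∃ c, 0 < c ∧ ∀ x, c * ‖x‖ ≤ N x := by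
  cases isEmpty_or_nonempty (Fin n)
  · exact ⟨1, one_pos, fun x => by simp [Subsingleton.elim x 0, hN.map_zero]⟩
  obtain ⟨u, hu, hmin⟩ := (isCompact_sphere (0 : Fin n → ℂ) 1).exists_isMinOn
    (NormedSpace.sphere_nonempty.2 zero_le_one) hN.continuous.continuousOn
  have hu0 : u ≠ 0 := ne_zero_of_mem_unit_sphere ⟨u, hu⟩
  refine ⟨N u, hN.pos hu0, fun x => ?_⟩
  rcases eq_or_ne x 0 with rfl | hx
  · simp [hN.map_zero]
  have hx' : 0 < ‖x‖ := norm_pos_iff.2 hx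
  have hsphere : ((‖x‖⁻¹ : ℝ) : ℂ) • x ∈ Metric.sphere (0 : Fin n → ℂ) 1 := by
    simp [norm_smul, hx'.ne']
  have : N u ≤ N (((‖x‖⁻¹ : ℝ) : ℂ) • x) := hmin hsphere
  rw [hN.2.2.1, norm_real, Real.norm_of_nonneg (inv_nonneg.2 hx'.le)] at this
  rwa [le_inv_mul_iff₀ hx', mul_comm] at this

end IsNormC

section Dual

variable {n : ℕ} {N : (Fin n → ℂ) → ℝ}

lemma norm_dotProduct_star_le (x z : Fin n → ℂ) : ‖x ⬝ᵥ star z‖ ≤ ‖x‖ * ∑ j, ‖z j‖ := by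
  calc ‖x ⬝ᵥ star z‖ ≤ ∑ j, ‖x j‖ * ‖z j‖ := by
        simpa [dotProduct] using norm_sum_le Finset.univ fun j => x j * star (z j)
    _ ≤ ∑ j, ‖x‖ * ‖z j‖ := by gcongr with j; exact norm_le_pi_norm x j
    _ = ‖x‖ * ∑ j, ‖z j‖ := (Finset.mul_sum ..).symm

lemma dualNorm_nonneg (N : (Fin n → ℂ) → ℝ) (z : Fin n → ℂ) : 0 ≤ dualNorm N z :=
  Real.sSup_nonneg <| by rintro _ ⟨x, -, rfl⟩; exact norm_nonneg _

lemma dualNorm_rpow_mul_dualNorm_rpow_nonneg (N0 N1 : (Fin n → ℂ) → ℝ) (z : Fin n → ℂ)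
    (l : ℝ) : 0 ≤ dualNorm N0 z ^ (1 - l) * dualNorm N1 z ^ l :=
  mul_nonneg (Real.rpow_nonneg (dualNorm_nonneg N0 z) _)
    (Real.rpow_nonneg (dualNorm_nonneg N1 z) _)

lemma IsNormC.bddAbove_dual (hN : IsNormC N) (z : Fin n → ℂ) :
    BddAbove ((fun x => ‖x ⬝ᵥ star z‖) '' {x | N x ≤ 1}) := by
  obtain ⟨c, hc, hle⟩ := hN.exists_pos_mul_norm_le
  refine ⟨c⁻¹ * ∑ j, ‖z j‖, ?_⟩
  rintro _ ⟨x, hx, rfl⟩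
  have hx' : ‖x‖ ≤ c⁻¹ * 1 := (le_inv_mul_iff₀ hc).2 ((hle x).trans hx)
  rw [mul_one] at hx'
  exact (norm_dotProduct_star_le x z).trans (by gcongr)

lemma IsNormC.norm_dotProduct_star_le_dualNorm_mul (hN : IsNormC N) (x z : Fin n → ℂ) :
    ‖x ⬝ᵥ star z‖ ≤ dualNorm N z * N x := by
  rcases eq_or_ne x 0 with rfl | hx
  · simp [hN.map_zero]
  have hNx := hN.pos hx
  have hunit : N ((((N x)⁻¹ : ℝ) : ℂ) • x) ≤ 1 := by
    rw [hN.2.2.1, norm_real, Real.norm_of_nonneg (inv_nonneg.2 hNx.le), inv_mul_cancel₀ hNx.ne']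
  have : ‖((((N x)⁻¹ : ℝ) : ℂ) • x) ⬝ᵥ star z‖ ≤ dualNorm N z :=
    le_csSup (hN.bddAbove_dual z) ⟨_, hunit, rfl⟩
  rw [smul_dotProduct, norm_smul, norm_real,
    Real.norm_of_nonneg (inv_nonneg.2 hNx.le), inv_mul_le_iff₀ hNx] at this
  rwa [mul_comm]

end Dual

lemma tendsto_exp_sub_sq_cocompact (a : ℝ) :
    Tendsto (fun t : ℝ => Real.exp (a - t ^ 2)) (cocompact ℝ) (nhds 0) := by
  have hsq : Tendsto (fun t : ℝ => t ^ 2) (cocompact ℝ) atTop := by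
    simpa only [Function.comp_def, Real.norm_eq_abs, sq_abs] using
      (tendsto_pow_atTop two_ne_zero).comp (tendsto_norm_cocompact_atTop (E := ℝ))
  exact Real.tendsto_exp_atBot.comp
    (tendsto_atBot_add_const_left _ a (tendsto_neg_atTop_atBot.comp hsq))

section Interpolation

variable {n : ℕ} {f : ℂ → Fin n → ℂ} {N0 N1 : (Fin n → ℂ) → ℝ}

/-- Guarantees that the infimum defining `interpNorm` is not over the empty set, where `sInf`
would be `0`. -/
lemma memF_exp_sq_sub_smul (l : ℝ) (x : Fin n → ℂ) :
    MemF fun w => cexp (w ^ 2 - (l : ℂ) ^ 2) • x := by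
  have hbound : ∀ w ∈ closedStrip,
      ‖cexp (w ^ 2 - (l : ℂ) ^ 2) • x‖ ≤ Real.exp (1 - w.im ^ 2) * ‖x‖ := by
    intro w ⟨hw0, hw1⟩
    rw [norm_smul, norm_exp]
    gcongr
    simp only [sq, sub_re, mul_re, ofReal_re, ofReal_im]
    nlinarith
  have hdecay : ∀ γ : ℝ → ℂ, (∀ t, γ t ∈ closedStrip) → (∀ t, (γ t).im = t) →
      Tendsto (fun t => cexp (γ t ^ 2 - (l : ℂ) ^ 2) • x) (cocompact ℝ) (nhds 0) := by
    intro γ hγ hγim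
    refine squeeze_zero_norm (fun t => ?_)
      (by simpa using (tendsto_exp_sub_sq_cocompact 1).mul_const ‖x‖)
    simpa [hγim] using hbound _ (hγ t)
  have hline0 := hdecay (fun t => t * I) (fun t => by simp [closedStrip]) (fun t => by simp)
  have hline1 := hdecay (fun t => 1 + t * I) (fun t => by simp [closedStrip]) (fun t => by simp)
  refine ⟨by fun_prop, by fun_prop, ⟨Real.exp 1 * ‖x‖, fun w hw => ?_⟩,
    hline0.mono_left atTop_le_cocompact, hline0.mono_left atBot_le_cocompact,
    hline1.mono_left atTop_le_cocompact, hline1.mono_left atBot_le_cocompact⟩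
  refine (hbound w hw).trans ?_
  gcongr
  nlinarith [sq_nonneg w.im]

lemma MemF.bddAbove_range (hf : MemF f) (hN0 : IsNormC N0) (γ : ℝ → ℂ)
    (hγ : ∀ t, γ t ∈ closedStrip) : BddAbove (Set.range fun t => N0 (f (γ t))) := by
  obtain ⟨C, hC, hle⟩ := hN0.exists_le_mul_norm
  obtain ⟨B, hB⟩ := hf.2.2.1
  exact ⟨C * B, by rintro _ ⟨t, rfl⟩; exact (hle _).trans (by gcongr; exact hB _ (hγ t))⟩

lemma MemF.le_fNorm_left (hf : MemF f) (hN0 : IsNormC N0) (N1 : (Fin n → ℂ) → ℝ) (t : ℝ) :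
    N0 (f (t * I)) ≤ fNorm N0 N1 f :=
  (le_ciSup (hf.bddAbove_range hN0 (fun t : ℝ => t * I) fun t => by simp [closedStrip]) t).trans
    (le_max_left _ _)

lemma MemF.le_fNorm_right (hf : MemF f) (N0 : (Fin n → ℂ) → ℝ) (hN1 : IsNormC N1) (t : ℝ) :
    N1 (f (1 + t * I)) ≤ fNorm N0 N1 f :=
  (le_ciSup (hf.bddAbove_range hN1 (fun t : ℝ => 1 + t * I) fun t => by simp [closedStrip])
    t).trans (le_max_right _ _)

lemma fNorm_nonneg (hN0 : IsNormC N0) (N1 : (Fin n → ℂ) → ℝ) (f : ℂ → Fin n → ℂ) :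
    0 ≤ fNorm N0 N1 f :=
  (Real.iSup_nonneg fun _ => hN0.1 _).trans (le_max_left _ _)

lemma MemF.diffContOnCl_dotProduct (hf : MemF f) (y : Fin n → ℂ) :
    DiffContOnCl ℂ (fun w => f w ⬝ᵥ y) (verticalStrip 0 1) := by
  have hd : ∀ j, DifferentiableOn ℂ (fun w => f w j) openStrip := differentiableOn_pi.1 hf.2.1
  have hc : ∀ j, ContinuousOn (fun w => f w j) closedStrip := continuousOn_pi.1 hf.1
  have hcl : closure (verticalStrip 0 1) ⊆ closedStrip :=
    closure_minimal (fun w hw => Ioo_subset_Icc_self hw) (isClosed_Icc.preimage continuous_re)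
  refine ⟨?_, ?_⟩
  · simp only [dotProduct]
    fun_prop
  · simp only [dotProduct]
    exact ContinuousOn.mono (by fun_prop) hcl

lemma MemF.bddAbove_norm_dotProduct (hf : MemF f) (z : Fin n → ℂ) :
    BddAbove ((norm ∘ fun w => f w ⬝ᵥ star z) '' verticalClosedStrip 0 1) := by
  obtain ⟨B, hB⟩ := hf.2.2.1
  refine ⟨B * ∑ j, ‖z j‖, ?_⟩
  rintro _ ⟨w, hw, rfl⟩
  exact (norm_dotProduct_star_le _ z).trans (by gcongr; exact hB w hw)

theorem MemF.norm_dotProduct_star_le (hf : MemF f) (hN0 : IsNormC N0) (hN1 : IsNormC N1)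
    {l : ℝ} (hl : l ∈ Icc (0 : ℝ) 1) (z : Fin n → ℂ) :
    ‖f l ⬝ᵥ star z‖ ≤ dualNorm N0 z ^ (1 - l) * dualNorm N1 z ^ l * fNorm N0 N1 f := by
  set F := fNorm N0 N1 f
  have hF : 0 ≤ F := fNorm_nonneg hN0 N1 f
  have h0 : ∀ w ∈ re ⁻¹' {0}, ‖f w ⬝ᵥ star z‖ ≤ dualNorm N0 z * F := by
    intro w hw
    obtain ⟨t, rfl⟩ : ∃ t : ℝ, w = t * I :=
      ⟨w.im, Complex.ext (by simpa using hw) (by simp)⟩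
    exact (hN0.norm_dotProduct_star_le_dualNorm_mul _ z).trans
      (mul_le_mul_of_nonneg_left (hf.le_fNorm_left hN0 N1 _) (dualNorm_nonneg N0 z))
  have h1 : ∀ w ∈ re ⁻¹' {1}, ‖f w ⬝ᵥ star z‖ ≤ dualNorm N1 z * F := by
    intro w hw
    obtain ⟨t, rfl⟩ : ∃ t : ℝ, w = 1 + t * I :=
      ⟨w.im, Complex.ext (by simpa using hw) (by simp)⟩
    exact (hN1.norm_dotProduct_star_le_dualNorm_mul _ z).trans
      (mul_le_mul_of_nonneg_left (hf.le_fNorm_right N0 hN1 _) (dualNorm_nonneg N1 z))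
  have hthree := norm_le_interp_of_mem_verticalClosedStrip₀₁' _ (z := l)
    (by simpa [verticalClosedStrip] using hl) (hf.diffContOnCl_dotProduct _)
    (hf.bddAbove_norm_dotProduct z) h0 h1
  rw [ofReal_re, Real.mul_rpow (dualNorm_nonneg N0 z) hF,
    Real.mul_rpow (dualNorm_nonneg N1 z) hF] at hthree
  calc ‖f l ⬝ᵥ star z‖
        ≤ dualNorm N0 z ^ (1 - l) * dualNorm N1 z ^ l * (F ^ (1 - l) * F ^ l) := by linarith
    _ = dualNorm N0 z ^ (1 - l) * dualNorm N1 z ^ l * F := by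
        rw [← Real.rpow_add' hF (by simp), sub_add_cancel, Real.rpow_one]

theorem norm_dotProduct_star_le_mul_interpNorm (hN0 : IsNormC N0) (hN1 : IsNormC N1)
    {l : ℝ} (hl : l ∈ Icc (0 : ℝ) 1) (x z : Fin n → ℂ) :
    ‖x ⬝ᵥ star z‖ ≤ dualNorm N0 z ^ (1 - l) * dualNorm N1 z ^ l * interpNorm N0 N1 l x := by
  set M := dualNorm N0 z ^ (1 - l) * dualNorm N1 z ^ l
  have hM : 0 ≤ M := dualNorm_rpow_mul_dualNorm_rpow_nonneg N0 N1 z l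
  have hne : (fNorm N0 N1 '' {f | MemF f ∧ f l = x}).Nonempty :=
    ⟨_, _, ⟨memF_exp_sq_sub_smul l x, by simp⟩, rfl⟩
  have hle : ∀ s ∈ fNorm N0 N1 '' {f | MemF f ∧ f l = x}, ‖x ⬝ᵥ star z‖ ≤ M * s := by
    rintro _ ⟨f, ⟨hf, rfl⟩, rfl⟩
    exact hf.norm_dotProduct_star_le hN0 hN1 hl z
  rcases hM.eq_or_lt with hM0 | hMpos
  · obtain ⟨s, hs⟩ := hne
    simpa [← hM0] using hle s hs
  · rw [← div_le_iff₀' hMpos]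
    exact le_csInf hne fun s hs => (div_le_iff₀' hMpos).2 (hle s hs)

end Interpolation

/-- The interpolation bound for dual norms. -/
theorem stmt_7 {n : ℕ} (N0 N1 : (Fin n → ℂ) → ℝ) (hN0 : IsNormC N0) (hN1 : IsNormC N1)
    (l : ℝ) (hl : l ∈ Icc (0 : ℝ) 1) (z : Fin n → ℂ) :
    dualNorm (interpNorm N0 N1 l) z ≤ dualNorm N0 z ^ (1 - l) * dualNorm N1 z ^ l := by
  have hM := dualNorm_rpow_mul_dualNorm_rpow_nonneg N0 N1 z l
  refine Real.sSup_le ?_ hM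
  rintro _ ⟨x, hx, rfl⟩
  exact (norm_dotProduct_star_le_mul_interpNorm hN0 hN1 hl x z).trans
    (mul_le_of_le_one_right hM hx)
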